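/- Let β be real, let α > 1/4 + β/8, set ρ := ρ_{α,β,0} and σ̃ := ρ_{1/4+β/8, β, 0}. Then the normalized geometric operator satisfies the identity (1/‖σ̃ − ρ‖)·(σ̃ − ρ − Re⟨σ̃, σ̃ − ρ⟩·1₉) = (1/(6√2))·(2·1₉ − U₁ − U₂) as 9×9 complex matrices (the witness C_I for region I in Weyl form). -/

import Mathlib

open Matrix Complex
open scoped Matrix Kronecker ComplexOrder

noncomputable section

/-- A density matrix: Hermitian, positive semidefinite, trace 1. -/
def IsDensityMatrix {n : Type*} [Fintype n] [DecidableEq n] (ρ : Matrix n n ℂ) : Prop :=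
  ρ.IsHermitian ∧ ρ.PosSemidef ∧ ρ.trace = 1

/-- A separable state on ℂ^d ⊗ ℂ^d : a finite convex combination of Kronecker
products of density matrices. -/
def IsSepState {d : ℕ} (ρ : Matrix (Fin d × Fin d) (Fin d × Fin d) ℂ) : Prop :=
  ∃ (K : ℕ) (p : Fin K → ℝ) (ρ₁ ρ₂ : Fin K → Matrix (Fin d) (Fin d) ℂ),
    (∀ k, 0 ≤ p k) ∧ (∑ k, p k = 1) ∧
    (∀ k, IsDensityMatrix (ρ₁ k)) ∧ (∀ k, IsDensityMatrix (ρ₂ k)) ∧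
    ρ = ∑ k, (p k : ℂ) • (ρ₁ k ⊗ₖ ρ₂ k)

/-- Hilbert–Schmidt inner product ⟨A,B⟩ = Tr(A†B). -/
def hsInner {n : Type*} [Fintype n] (A B : Matrix n n ℂ) : ℂ := (Aᴴ * B).trace

/-- Hilbert–Schmidt (Frobenius) norm ‖A‖ = √Tr(A†A). -/
def hsNorm {n : Type*} [Fintype n] (A : Matrix n n ℂ) : ℝ :=
  Real.sqrt ((Aᴴ * A).trace.re)

/-- The Weyl operator U_{nm} on ℂ^d: (U_{nm})_{k,l} = exp(2πi k n / d) if l = (k+m) mod d. -/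
def weyl (d : ℕ) (n m : Fin d) : Matrix (Fin d) (Fin d) ℂ :=
  Matrix.of fun k l =>
    if l = k + m then Complex.exp (2 * Real.pi * Complex.I * k.val * n.val / d) else 0

/-- The maximally entangled two-qutrit vector |φ⁺₃⟩. -/
def phiPlus3 : (Fin 3 × Fin 3) → ℂ :=
  fun p => if p.1 = p.2 then ((1 / Real.sqrt 3 : ℝ) : ℂ) else 0

/-- The projector |φ⁺₃⟩⟨φ⁺₃|. -/
def projPhiPlus3 : Matrix (Fin 3 × Fin 3) (Fin 3 × Fin 3) ℂ :=
  vecMulVec phiPlus3 (star phiPlus3)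

/-- The two-qutrit Bell projectors P_{nm}. -/
def bellP (n m : Fin 3) : Matrix (Fin 3 × Fin 3) (Fin 3 × Fin 3) ℂ :=
  (weyl 3 n m ⊗ₖ (1 : Matrix (Fin 3) (Fin 3) ℂ)) * projPhiPlus3 *
    (weyl 3 n m ⊗ₖ (1 : Matrix (Fin 3) (Fin 3) ℂ))ᴴ

/-- The three-parameter family of two-qutrit states ρ_{α,β,γ}. -/
def rhoFam (α β γ : ℝ) : Matrix (Fin 3 × Fin 3) (Fin 3 × Fin 3) ℂ :=
  (((1 - α - β - γ) / 9 : ℝ) : ℂ) • (1 : Matrix (Fin 3 × Fin 3) (Fin 3 × Fin 3) ℂ) +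
    (α : ℂ) • bellP 0 0 + ((β / 2 : ℝ) : ℂ) • (bellP 1 0 + bellP 2 0) +
    ((γ / 3 : ℝ) : ℂ) • (bellP 0 1 + bellP 1 1 + bellP 2 1)

/-- The operator U₁. -/
def opU1 : Matrix (Fin 3 × Fin 3) (Fin 3 × Fin 3) ℂ :=
  weyl 3 0 1 ⊗ₖ weyl 3 0 1 + weyl 3 0 2 ⊗ₖ weyl 3 0 2 + weyl 3 1 1 ⊗ₖ weyl 3 2 1 +
    weyl 3 1 2 ⊗ₖ weyl 3 2 2 + weyl 3 2 1 ⊗ₖ weyl 3 1 1 + weyl 3 2 2 ⊗ₖ weyl 3 1 2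

/-- The operator U₂ᴵ. -/
def opU2I : Matrix (Fin 3 × Fin 3) (Fin 3 × Fin 3) ℂ := weyl 3 1 0 ⊗ₖ weyl 3 2 0

/-- The operator U₂ᴵᴵ. -/
def opU2II : Matrix (Fin 3 × Fin 3) (Fin 3 × Fin 3) ℂ := weyl 3 2 0 ⊗ₖ weyl 3 1 0

/-- The operator U₂ = U₂ᴵ + U₂ᴵᴵ. -/
def opU2 : Matrix (Fin 3 × Fin 3) (Fin 3 × Fin 3) ℂ := opU2I + opU2II

/-- σ₊ = (1/3)(|01⟩⟨01| + |12⟩⟨12| + |20⟩⟨20|). -/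
def sigmaPlus : Matrix (Fin 3 × Fin 3) (Fin 3 × Fin 3) ℂ :=
  (1 / 3 : ℂ) • Matrix.diagonal (fun p => if p.2 = p.1 + 1 then 1 else 0)

/-- σ₋ = (1/3)(|10⟩⟨10| + |21⟩⟨21| + |02⟩⟨02|). -/
def sigmaMinus : Matrix (Fin 3 × Fin 3) (Fin 3 × Fin 3) ℂ :=
  (1 / 3 : ℂ) • Matrix.diagonal (fun p => if p.1 = p.2 + 1 then 1 else 0)

/-- The Horodecki states ρ_b. -/
def horodecki (b : ℝ) : Matrix (Fin 3 × Fin 3) (Fin 3 × Fin 3) ℂ :=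
  (2 / 7 : ℂ) • projPhiPlus3 + ((b / 7 : ℝ) : ℂ) • sigmaPlus +
    (((5 - b) / 7 : ℝ) : ℂ) • sigmaMinus

/-- Partial transpose in the second subsystem. -/
def ptB (ρ : Matrix (Fin 3 × Fin 3) (Fin 3 × Fin 3) ℂ) :
    Matrix (Fin 3 × Fin 3) (Fin 3 × Fin 3) ℂ :=
  Matrix.of fun p q => ρ (p.1, q.2) (q.1, p.2)

/-!
With `c := α - (1/4 + β/8) > 0` one has `σ̃ - ρ = c • (1/9 - P₀₀)`, and
`⟨σ̃, 1/9 - P₀₀⟩ = 1/9 - ⟨φ⁺|σ̃|φ⁺⟩ = -2/9` because `σ̃` has trace one and fidelity `1/3` with `φ⁺`.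
So the left-hand side is `(1 - 3 P₀₀) / (2√2)`. On the right, the expansion
`∑ₙₘ U_{nm} ⊗ U_{-n,m} = 9 P₀₀` of the maximally entangled projector in the Weyl basis,
a consequence of the orthogonality of the characters `k ↦ ωᵏⁿ` of `ℤ/3`,
gives `U₁ + U₂ = 9 P₀₀ - 1`.
-/

section Weyl

variable {d : ℕ}

lemma weyl_apply (n m k l : Fin d) :
    weyl d n m k l = if l = k + m then exp (2 * Real.pi * I / d) ^ (k.val * n.val) else 0 := by
  rw [weyl, of_apply, ← Complex.exp_nat_mul]
  push_cast
  ring_nf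

lemma weyl_zero_zero [NeZero d] : weyl d 0 0 = 1 := by
  ext k l
  simp [weyl_apply, one_apply, eq_comm]

lemma IsPrimitiveRoot.star_eq_inv {ζ : ℂ} (hζ : IsPrimitiveRoot ζ d) (hd : d ≠ 0) :
    star ζ = ζ⁻¹ :=
  (Complex.inv_eq_conj (hζ.norm'_eq_one hd)).symm

lemma IsPrimitiveRoot.sum_pow_mul_star_pow {ζ : ℂ} (hζ : IsPrimitiveRoot ζ d) (k l : Fin d) :
    ∑ n : Fin d, ζ ^ (k.val * n.val) * star (ζ ^ (l.val * n.val)) =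
      if k = l then (d : ℂ) else 0 := by
  have hd : d ≠ 0 := (Fin.pos k).ne'
  set x := ζ ^ k.val * (ζ ^ l.val)⁻¹
  have hterm : ∀ n : Fin d, ζ ^ (k.val * n.val) * star (ζ ^ (l.val * n.val)) = x ^ n.val := by
    intro n
    simp only [x, star_pow, hζ.star_eq_inv hd, mul_pow, inv_pow, ← pow_mul]
  rw [Fintype.sum_congr _ _ hterm, Fin.sum_univ_eq_sum_range (x ^ ·)]
  split_ifs with hkl
  · simp [x, hkl, hζ.ne_zero hd]
  · have hx : x ≠ 1 := by
      rw [Ne, mul_inv_eq_one₀ (pow_ne_zero _ (hζ.ne_zero hd))]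
      exact fun h => hkl (Fin.ext (hζ.pow_inj k.isLt l.isLt h))
    rw [geom_sum_eq hx, mul_pow, inv_pow, ← pow_mul, ← pow_mul, mul_comm k.val, mul_comm l.val,
      pow_mul, pow_mul, hζ.pow_eq_one]
    simp

lemma weyl_zero_right [NeZero d] (n : Fin d) :
    weyl d n 0 = diagonal fun k => exp (2 * Real.pi * I / d) ^ (k.val * n.val) := by
  ext k l
  rw [weyl_apply, diagonal_apply, add_zero]
  exact if_congr eq_comm rfl rfl

/-- The unnormalised maximally entangled vector `∑ₖ |k k⟩`. -/
def maxEntVec (d : ℕ) : Fin d × Fin d → ℂ := fun p => if p.1 = p.2 then 1 else 0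

lemma weyl_map_star [NeZero d] (n m : Fin d) : (weyl d n m).map star = weyl d (-n) m := by
  have hζ := Complex.isPrimitiveRoot_exp d (NeZero.ne d)
  ext k l
  rw [map_apply, weyl_apply, weyl_apply]
  split_ifs
  · rw [star_pow, hζ.star_eq_inv (NeZero.ne d), inv_pow, inv_eq_of_mul_eq_one_right]
    rw [← pow_add, ← mul_add, hζ.pow_eq_one_iff_dvd]
    apply Dvd.dvd.mul_left
    rw [Nat.dvd_iff_mod_eq_zero, ← Fin.val_add, add_neg_cancel, Fin.val_zero]
  · simp

lemma sum_weyl_kronecker_weyl_neg [NeZero d] :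
    ∑ n : Fin d, ∑ m : Fin d, weyl d n m ⊗ₖ weyl d (-n) m =
      (d : ℂ) • vecMulVec (maxEntVec d) (maxEntVec d) := by
  have hζ := Complex.isPrimitiveRoot_exp d (NeZero.ne d)
  ext ⟨k₁, k₂⟩ ⟨l₁, l₂⟩
  simp only [← weyl_map_star, Matrix.sum_apply, kroneckerMap_apply, map_apply, weyl_apply]
  rw [Finset.sum_comm]
  -- Orthogonality of the characters in `n` forces `k₁ = k₂`; the shift is then `m = l₁ - k₁`.
  have hinner : ∀ m : Fin d, ∑ n : Fin d,
      (if l₁ = k₁ + m then exp (2 * Real.pi * I / d) ^ (k₁.val * n.val) else 0) *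
        star (if l₂ = k₂ + m then exp (2 * Real.pi * I / d) ^ (k₂.val * n.val) else 0) =
      if l₁ - k₁ = m then (if l₂ - k₂ = m ∧ k₁ = k₂ then (d : ℂ) else 0) else 0 := by
    intro m
    by_cases h₁ : l₁ = k₁ + m <;> by_cases h₂ : l₂ = k₂ + m <;>
      simp only [h₁, h₂, if_true, if_false, zero_mul, star_zero, mul_zero, Finset.sum_const_zero,
        hζ.sum_pow_mul_star_pow] <;>
      simp_all [sub_eq_iff_eq_add']
  simp only [hinner, Finset.sum_ite_eq, Finset.mem_univ, if_true]
  by_cases hk : k₁ = k₂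
  · subst hk
    simp [vecMulVec_apply, maxEntVec, @eq_comm _ l₂]
  · simp [vecMulVec_apply, maxEntVec, hk]

lemma star_maxEntVec : star (maxEntVec d) = maxEntVec d := by
  ext p
  simp [maxEntVec, apply_ite star]

lemma maxEntVec_dotProduct_self : maxEntVec d ⬝ᵥ maxEntVec d = d := by
  simp [dotProduct, maxEntVec, Fintype.sum_prod_type]

lemma trace_diagonal_maxEntVec : (diagonal (maxEntVec d)).trace = d := by
  rw [trace_diagonal, Fintype.sum_prod_type]
  simp [maxEntVec]

lemma diagonal_maxEntVec_mulVec : diagonal (maxEntVec d) *ᵥ maxEntVec d = maxEntVec d := by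
  ext p
  simp [mulVec_diagonal, maxEntVec]

end Weyl

section HilbertSchmidt
variable {n : Type*} [Fintype n]

lemma hsInner_smul_right (A B : Matrix n n ℂ) (c : ℂ) : hsInner A (c • B) = c * hsInner A B := by
  rw [hsInner, hsInner, Matrix.mul_smul, trace_smul, smul_eq_mul]

lemma hsNorm_ofReal_smul (r : ℝ) (A : Matrix n n ℂ) : hsNorm ((r : ℂ) • A) = |r| * hsNorm A := by
  have h : ((r : ℂ) • A)ᴴ * ((r : ℂ) • A) = ((r ^ 2 : ℝ) : ℂ) • (Aᴴ * A) := by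
    rw [conjTranspose_smul, Matrix.smul_mul, Matrix.mul_smul, smul_smul, Complex.star_def,
      conj_ofReal]
    push_cast
    ring_nf
  rw [hsNorm, hsNorm, h, trace_smul, smul_eq_mul, re_ofReal_mul, Real.sqrt_mul (sq_nonneg r),
    Real.sqrt_sq_eq_abs]

end HilbertSchmidt

lemma projPhiPlus3_eq : projPhiPlus3 = (1 / 3 : ℂ) • vecMulVec (maxEntVec 3) (maxEntVec 3) := by
  have h : (Real.sqrt 3 : ℂ)⁻¹ * (Real.sqrt 3 : ℂ)⁻¹ = 3⁻¹ := by
    rw [← mul_inv, ← Complex.ofReal_mul, Real.mul_self_sqrt (by norm_num)]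
    norm_num
  ext p q
  by_cases hp : p.1 = p.2 <;> by_cases hq : q.1 = q.2 <;>
    simp [projPhiPlus3, phiPlus3, maxEntVec, vecMulVec_apply, hp, hq, h]

lemma projPhiPlus3_mul_self : projPhiPlus3 * projPhiPlus3 = projPhiPlus3 := by
  rw [projPhiPlus3_eq, smul_mul_smul, vecMulVec_mul_vecMulVec, maxEntVec_dotProduct_self,
    vecMulVec_smul, smul_smul]
  norm_num

lemma conjTranspose_projPhiPlus3 : projPhiPlus3ᴴ = projPhiPlus3 := by
  rw [projPhiPlus3_eq, conjTranspose_smul, conjTranspose_vecMulVec, star_maxEntVec]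
  norm_num

lemma trace_projPhiPlus3 : projPhiPlus3.trace = 1 := by
  rw [projPhiPlus3_eq, trace_smul, trace_vecMulVec, maxEntVec_dotProduct_self]
  norm_num

lemma diagonal_maxEntVec_mul_projPhiPlus3 :
    diagonal (maxEntVec 3) * projPhiPlus3 = projPhiPlus3 := by
  rw [projPhiPlus3_eq, Matrix.mul_smul, mul_vecMulVec, diagonal_maxEntVec_mulVec]

lemma bellP_zero_zero : bellP 0 0 = projPhiPlus3 := by
  simp [bellP, weyl_zero_zero]

lemma bellP_zero_right_apply (n : Fin 3) (p q : Fin 3 × Fin 3) :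
    bellP n 0 p q = exp (2 * Real.pi * I / (3 : ℕ)) ^ (p.1.val * n.val) * projPhiPlus3 p q *
      star (exp (2 * Real.pi * I / (3 : ℕ)) ^ (q.1.val * n.val)) := by
  rw [bellP, weyl_zero_right, ← diagonal_one, diagonal_kronecker_diagonal, diagonal_conjTranspose,
    mul_diagonal, diagonal_mul]
  simp

lemma sum_bellP_zero_right : ∑ n : Fin 3, bellP n 0 = diagonal (maxEntVec 3) := by
  have hζ := Complex.isPrimitiveRoot_exp 3 (by norm_num)
  -- Averaging over the phases `U_{n0} ⊗ 1` deletes the off-diagonal blocks of `P₀₀`.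
  ext p q
  have hterm : ∀ n : Fin 3, bellP n 0 p q = projPhiPlus3 p q *
      (exp (2 * Real.pi * I / (3 : ℕ)) ^ (p.1.val * n.val) *
        star (exp (2 * Real.pi * I / (3 : ℕ)) ^ (q.1.val * n.val))) := fun n => by
    rw [bellP_zero_right_apply]; ring
  rw [Matrix.sum_apply, Fintype.sum_congr _ _ hterm, ← Finset.mul_sum, hζ.sum_pow_mul_star_pow,
    projPhiPlus3_eq]
  obtain ⟨p₁, p₂⟩ := p
  obtain ⟨q₁, q₂⟩ := q
  by_cases hp : p₁ = p₂ <;> by_cases hq : q₁ = q₂ <;> by_cases hpq : p₁ = q₁ <;>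
    simp_all [maxEntVec, vecMulVec_apply, diagonal_apply]

lemma opU1_add_opU2 : opU1 + opU2 = (9 : ℂ) • projPhiPlus3 - 1 := by
  rw [projPhiPlus3_eq, smul_smul, show (9 : ℂ) * (1 / 3) = ((3 : ℕ) : ℂ) by norm_num,
    ← sum_weyl_kronecker_weyl_neg]
  have hneg₁ : (-1 : Fin 3) = 2 := rfl
  have hneg₂ : (-2 : Fin 3) = 1 := rfl
  simp only [Fin.sum_univ_three, neg_zero, hneg₁, hneg₂, weyl_zero_zero, one_kronecker_one, opU1,
    opU2, opU2I, opU2II]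
  abel

lemma rhoFam_zero_right (a b : ℝ) :
    rhoFam a b 0 = (((1 - a - b) / 9 : ℝ) : ℂ) • 1 + ((a - b / 2 : ℝ) : ℂ) • projPhiPlus3 +
      ((b / 2 : ℝ) : ℂ) • diagonal (maxEntVec 3) := by
  rw [rhoFam, ← sum_bellP_zero_right, Fin.sum_univ_three, bellP_zero_zero]
  push_cast
  module

def mixedMinusBell : Matrix (Fin 3 × Fin 3) (Fin 3 × Fin 3) ℂ := (1 / 9 : ℂ) • 1 - projPhiPlus3

lemma rhoFam_sub_rhoFam (a a' b : ℝ) :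
    rhoFam a' b 0 - rhoFam a b 0 = ((a - a' : ℝ) : ℂ) • mixedMinusBell := by
  rw [rhoFam_zero_right, rhoFam_zero_right, mixedMinusBell]
  push_cast
  module

lemma hsInner_rhoFam_mixedMinusBell (a b : ℝ) :
    hsInner (rhoFam a b 0) mixedMinusBell = (((b - 8 * a) / 9 : ℝ) : ℂ) := by
  rw [hsInner, rhoFam_zero_right]
  simp only [conjTranspose_add, conjTranspose_smul, conjTranspose_one, conjTranspose_projPhiPlus3,
    diagonal_conjTranspose, star_maxEntVec, Complex.star_def, conj_ofReal, add_mul, smul_mul,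
    one_mul, mixedMinusBell, mul_sub, Matrix.mul_smul, mul_one, projPhiPlus3_mul_self,
    diagonal_maxEntVec_mul_projPhiPlus3, trace_add, trace_sub, trace_smul, trace_one,
    trace_projPhiPlus3, trace_diagonal_maxEntVec, Fintype.card_prod, Fintype.card_fin, smul_eq_mul]
  push_cast
  ring

lemma hsNorm_mixedMinusBell : hsNorm mixedMinusBell = 2 * Real.sqrt 2 / 3 := by
  have h : (mixedMinusBellᴴ * mixedMinusBell).trace = ((8 / 9 : ℝ) : ℂ) := by
    simp only [mixedMinusBell, conjTranspose_sub, conjTranspose_smul, conjTranspose_one,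
      conjTranspose_projPhiPlus3, sub_mul, mul_sub, smul_mul, Matrix.mul_smul, one_mul, mul_one,
      projPhiPlus3_mul_self, trace_sub, trace_smul, trace_one, trace_projPhiPlus3,
      Fintype.card_prod, Fintype.card_fin, smul_eq_mul]
    norm_num
  rw [hsNorm, h, ofReal_re, Real.sqrt_eq_iff_mul_self_eq (by norm_num) (by positivity)]
  ring_nf
  norm_num

/-- The witness C_I for region I in Weyl form. -/
theorem stmt7 (α β : ℝ) (hα : 1 / 4 + β / 8 < α)
    (ρ σt : Matrix (Fin 3 × Fin 3) (Fin 3 × Fin 3) ℂ)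
    (hρ : ρ = rhoFam α β 0) (hσt : σt = rhoFam (1 / 4 + β / 8) β 0) :
    (1 / hsNorm (σt - ρ)) • (σt - ρ - (((hsInner σt (σt - ρ)).re : ℝ) : ℂ) • 1)
      = ((1 / (6 * Real.sqrt 2) : ℝ) : ℂ) •
        (2 • (1 : Matrix (Fin 3 × Fin 3) (Fin 3 × Fin 3) ℂ) - opU1 - opU2) := by
  set c := α - (1 / 4 + β / 8)
  have hc : 0 < c := sub_pos.mpr hα
  have hdiff : σt - ρ = (c : ℂ) • mixedMinusBell := by rw [hρ, hσt, rhoFam_sub_rhoFam]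
  have hnorm : hsNorm (σt - ρ) = c * (2 * Real.sqrt 2 / 3) := by
    rw [hdiff, hsNorm_ofReal_smul, hsNorm_mixedMinusBell, abs_of_pos hc]
  have hinner : (hsInner σt (σt - ρ)).re = -(2 * c) / 9 := by
    rw [hdiff, hσt, hsInner_smul_right, hsInner_rhoFam_mixedMinusBell, ← ofReal_mul, ofReal_re]
    ring
  rw [hnorm, hinner, hdiff, sub_sub, opU1_add_opU2, mixedMinusBell]
  have hc₀ : (c : ℂ) ≠ 0 := ofReal_ne_zero.mpr hc.ne'
  have hsqrt₀ : (Real.sqrt 2 : ℂ) ≠ 0 := ofReal_ne_zero.mpr (by positivity)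
  -- The normalising factor `1 / hsNorm _` acts as a real scalar.
  match_scalars <;> simp only [Algebra.algebraMap_eq_smul_one, Complex.real_smul, mul_one] <;>
    field_simp <;> ring
end
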